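/- arXiv:2504.15615 — 4 statements merged into one kernel-verified Lean document; each statement's English description precedes it below -/
import Mathlib

section
/- Proposition 3.4 (no type regret under the smooth optimal decision rule). Fix ε > 0, β > 0, and loss functions ℓ, ℓ′ : 𝒜×𝒴 → ℝ with loss estimators f_ℓ, f_{ℓ′} : 𝒳×𝒜 → ℝ, and let k̃_ℓ, k̃_{ℓ′} be the smooth optimal decision rules induced by f_ℓ and f_{ℓ′}. Suppose the decision-calibration conditions |E_{(x,y)∼D}[Σ_{a∈𝒜} k̃(x,a)·(ℓ(a,y) − f_ℓ(x,a))]| ≤ ε hold for both k̃ = k̃_ℓ and k̃ = k̃_{ℓ′}. Then E_{(x,y)∼D}[Σ_{a∈𝒜} k̃_ℓ(x,a)·ℓ(a,y)] ≤ E_{(x,y)∼D}[Σ_{a∈𝒜} k̃_{ℓ′}(x,a)·ℓ(a,y)] + 2ε + (log|𝒜| + 1)/β. -/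
/-!
The Gibbs distribution `p ∝ exp (-β f)` satisfies `β 𝔼_p f = H(p) - log Z`, where the entropy
`H(p)` is at most `log |A|` and `log Z ≥ -β min f`. Hence the smooth rule's estimated loss is within
`log |A| / β` of `min f`, and so of the estimated loss of any other rule. Calibration of both rules
transfers this comparison from the estimated loss `fℓ` to the true loss `ℓ`, at a cost of `ε` each.
-/

open MeasureTheory

/-- The smooth optimal decision rule (quantal response) induced by a loss estimator `f`. -/
noncomputable def smoothRule {X A : Type*} [Fintype A]
    (β : ℝ) (f : X → A → ℝ) (x : X) (a : A) : ℝ :=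
  Real.exp (-β * f x a) / ∑ a', Real.exp (-β * f x a')

open Finset Real

theorem sum_negMulLog_le_log_card {A : Type*} [Fintype A] {p : A → ℝ} (hp₀ : ∀ a, 0 ≤ p a)
    (hp₁ : ∑ a, p a = 1) : ∑ a, negMulLog (p a) ≤ log (Fintype.card A) := by
  have hA : Nonempty A := by
    by_contra h
    simp [not_nonempty_iff.mp h] at hp₁
  have hn : (0 : ℝ) < Fintype.card A := by exact_mod_cast Fintype.card_pos
  have jensen := concaveOn_negMulLog.le_map_sum (t := univ) (w := fun _ => (Fintype.card A : ℝ)⁻¹)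
    (p := p) (fun _ _ => by positivity) (by simp [hn.ne']) (fun a _ => hp₀ a)
  have uniform :
      negMulLog (Fintype.card A : ℝ)⁻¹ = (Fintype.card A : ℝ)⁻¹ * log (Fintype.card A) := by
    simp [negMulLog, log_inv]
  simp only [smul_eq_mul, ← mul_sum, hp₁, mul_one, uniform] at jensen
  exact le_of_mul_le_mul_left jensen (inv_pos.mpr hn)

section smoothRule

variable {X A : Type*} [Fintype A] [Nonempty A] (β : ℝ) (f : X → A → ℝ) (x : X)

theorem sum_exp_pos : 0 < ∑ a, exp (-β * f x a) :=
  sum_pos (fun _ _ => exp_pos _) univ_nonempty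

theorem smoothRule_pos (a : A) : 0 < smoothRule β f x a :=
  div_pos (exp_pos _) (sum_exp_pos β f x)

theorem sum_smoothRule : ∑ a, smoothRule β f x a = 1 := by
  simp only [smoothRule, ← sum_div]
  exact div_self (sum_exp_pos β f x).ne'

theorem log_smoothRule (a : A) :
    log (smoothRule β f x a) = -β * f x a - log (∑ a', exp (-β * f x a')) := by
  rw [smoothRule, log_div (exp_pos _).ne' (sum_exp_pos β f x).ne', log_exp]

theorem neg_mul_inf'_le_log_sum_exp :
    -β * univ.inf' univ_nonempty (f x) ≤ log (∑ a, exp (-β * f x a)) := by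
  obtain ⟨a₀, -, ha₀⟩ := exists_mem_eq_inf' univ_nonempty (f x)
  rw [ha₀, ← log_exp (-β * f x a₀)]
  exact log_le_log (exp_pos _) <|
    single_le_sum (f := fun a => exp (-β * f x a)) (fun a _ => (exp_pos _).le) (mem_univ a₀)

theorem sum_smoothRule_mul_le_inf' (hβ : 0 < β) :
    ∑ a, smoothRule β f x a * f x a
      ≤ univ.inf' univ_nonempty (f x) + log (Fintype.card A) / β := by
  set Z := ∑ a, exp (-β * f x a)
  have entropy : ∑ a, negMulLog (smoothRule β f x a)
      = β * ∑ a, smoothRule β f x a * f x a + log Z := by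
    calc ∑ a, negMulLog (smoothRule β f x a)
        = ∑ a, (β * (smoothRule β f x a * f x a) + smoothRule β f x a * log Z) :=
          sum_congr rfl fun a _ => by rw [negMulLog, log_smoothRule]; ring
      _ = β * ∑ a, smoothRule β f x a * f x a + log Z := by
          rw [sum_add_distrib, ← mul_sum, ← sum_mul, sum_smoothRule, one_mul]
  have entropy_le := sum_negMulLog_le_log_card (fun a => (smoothRule_pos β f x a).le)
    (sum_smoothRule β f x)
  have log_Z_ge := neg_mul_inf'_le_log_sum_exp β f x
  rw [← sub_le_iff_le_add', le_div_iff₀ hβ]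
  linarith

end smoothRule

theorem sum_smoothRule_mul_le_sum_mul {X A : Type*} [Fintype A] [Nonempty A] {β : ℝ}
    (hβ : 0 < β) (f : X → A → ℝ) (x : X) {q : A → ℝ} (hq₀ : ∀ a, 0 ≤ q a)
    (hq₁ : ∑ a, q a = 1) :
    ∑ a, smoothRule β f x a * f x a ≤ ∑ a, q a * f x a + log (Fintype.card A) / β := by
  have inf'_le : univ.inf' univ_nonempty (f x) ≤ ∑ a, q a * f x a := by
    simpa [centerMass_eq_of_sum_1 _ _ hq₁] using
      inf_le_centerMass (s := univ) (f := f x) (fun a _ => hq₀ a) (by simp [hq₁])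
  linarith [sum_smoothRule_mul_le_inf' β f x hβ]

theorem integral_sum_mul_sub {Ω A : Type*} [MeasurableSpace Ω] [Fintype A] {μ : Measure Ω}
    {w u v : Ω → A → ℝ} (hu : Integrable (fun z => ∑ a, w z a * u z a) μ)
    (hv : Integrable (fun z => ∑ a, w z a * v z a) μ) :
    ∫ z, ∑ a, w z a * (u z a - v z a) ∂μ
      = ∫ z, ∑ a, w z a * u z a ∂μ - ∫ z, ∑ a, w z a * v z a ∂μ := by
  simp only [mul_sub, sum_sub_distrib]
  exact integral_sub hu hv

theorem stmt3_general
    {X Y A : Type*} [MeasurableSpace X] [MeasurableSpace Y]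
    [Fintype A] [Nonempty A]
    (D : Measure (X × Y)) [IsProbabilityMeasure D]
    (ε β : ℝ) (hβ : 0 < β)
    (ℓ : A → Y → ℝ) (fℓ fℓ' : X → A → ℝ)
    (hInt1 : Integrable (fun z : X × Y => ∑ a, smoothRule β fℓ z.1 a * ℓ a z.2) D)
    (hInt2 : Integrable (fun z : X × Y => ∑ a, smoothRule β fℓ' z.1 a * ℓ a z.2) D)
    (hInt3 : Integrable (fun z : X × Y => ∑ a, smoothRule β fℓ z.1 a * fℓ z.1 a) D)
    (hInt4 : Integrable (fun z : X × Y => ∑ a, smoothRule β fℓ' z.1 a * fℓ z.1 a) D)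
    (hcal1 : |∫ z, (∑ a, smoothRule β fℓ z.1 a * (ℓ a z.2 - fℓ z.1 a)) ∂D| ≤ ε)
    (hcal2 : |∫ z, (∑ a, smoothRule β fℓ' z.1 a * (ℓ a z.2 - fℓ z.1 a)) ∂D| ≤ ε) :
    (∫ z, (∑ a, smoothRule β fℓ z.1 a * ℓ a z.2) ∂D)
      ≤ (∫ z, (∑ a, smoothRule β fℓ' z.1 a * ℓ a z.2) ∂D) + 2 * ε
          + (Real.log (Fintype.card A) + 1) / β := by
  rw [integral_sum_mul_sub hInt1 hInt3] at hcal1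
  rw [integral_sum_mul_sub hInt2 hInt4] at hcal2
  have estimators : ∫ z, ∑ a, smoothRule β fℓ z.1 a * fℓ z.1 a ∂D
      ≤ ∫ z, ∑ a, smoothRule β fℓ' z.1 a * fℓ z.1 a ∂D + log (Fintype.card A) / β :=
    calc ∫ z, ∑ a, smoothRule β fℓ z.1 a * fℓ z.1 a ∂D
        ≤ ∫ z, (∑ a, smoothRule β fℓ' z.1 a * fℓ z.1 a + log (Fintype.card A) / β) ∂D :=
          integral_mono hInt3 (hInt4.add (integrable_const _)) fun z =>
            sum_smoothRule_mul_le_sum_mul hβ fℓ z.1 (fun a => (smoothRule_pos β fℓ' z.1 a).le)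
              (sum_smoothRule β fℓ' z.1)
      _ = ∫ z, ∑ a, smoothRule β fℓ' z.1 a * fℓ z.1 a ∂D + log (Fintype.card A) / β := by
          rw [integral_add hInt4 (integrable_const _), integral_const, probReal_univ, one_smul]
  have slack : 0 ≤ 1 / β := by positivity
  rw [add_div]
  linarith [(abs_le.mp hcal1).2, (abs_le.mp hcal2).1]

/-- **Proposition 3.4** (no type regret under the smooth optimal decision rule). -/
theorem stmt3
    {X Y A : Type*} [MeasurableSpace X] [MeasurableSpace Y]
    [Fintype A] [Nonempty A]
    (D : Measure (X × Y)) [IsProbabilityMeasure D]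
    (ε β : ℝ) (hε : 0 < ε) (hβ : 0 < β)
    (ℓ ℓ' : A → Y → ℝ) (fℓ fℓ' : X → A → ℝ)
    (hInt1 : Integrable (fun z : X × Y => ∑ a, smoothRule β fℓ z.1 a * ℓ a z.2) D)
    (hInt2 : Integrable (fun z : X × Y => ∑ a, smoothRule β fℓ' z.1 a * ℓ a z.2) D)
    (hInt3 : Integrable (fun z : X × Y => ∑ a, smoothRule β fℓ z.1 a * fℓ z.1 a) D)
    (hInt4 : Integrable (fun z : X × Y => ∑ a, smoothRule β fℓ' z.1 a * fℓ z.1 a) D)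
    (hInt5 : Integrable (fun z : X × Y => Finset.univ.inf' Finset.univ_nonempty (fℓ z.1)) D)
    (hcal1 : |∫ z, (∑ a, smoothRule β fℓ z.1 a * (ℓ a z.2 - fℓ z.1 a)) ∂D| ≤ ε)
    (hcal2 : |∫ z, (∑ a, smoothRule β fℓ' z.1 a * (ℓ a z.2 - fℓ z.1 a)) ∂D| ≤ ε) :
    (∫ z, (∑ a, smoothRule β fℓ z.1 a * ℓ a z.2) ∂D)
      ≤ (∫ z, (∑ a, smoothRule β fℓ' z.1 a * ℓ a z.2) ∂D) + 2 * ε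
          + (Real.log (Fintype.card A) + 1) / β :=
  stmt3_general D ε β hβ ℓ fℓ fℓ' hInt1 hInt2 hInt3 hInt4 hcal1 hcal2
end

section
/- Lemma 4.2 (decision calibration error for two actions and linear losses). The supremum over r₁, r₂ in the closed Euclidean unit ball of ℝ^d and r ∈ ℝ^d of |E_{(x,y)∼D}[ 1{⟨r, p(x)⟩ > 0}·⟨r₂, y − p(x)⟩ + 1{⟨r, p(x)⟩ ≤ 0}·⟨r₁, y − p(x)⟩ ]| is equal to the supremum over r ∈ ℝ^d of ‖E_{(x,y)∼D}[(y − p(x))·1{⟨r, p(x)⟩ > 0}]‖₂ + ‖E_{(x,y)∼D}[(y − p(x))·1{⟨r, p(x)⟩ ≤ 0}]‖₂. -/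
open MeasureTheory RealInnerProductSpace
open scoped Classical

/-!
Write `A r` and `B r` for the expected residuals `y - p x` on the two sides `⟪r, p x⟫ > 0` and
`⟪r, p x⟫ ≤ 0` of the split. By linearity of the integral, the expected loss difference for
`(r₁, r₂, r)` is `⟪r₂, A r⟫ + ⟪r₁, B r⟫`. For fixed `r`, Cauchy–Schwarz bounds its absolute value
by `‖A r‖ + ‖B r‖`, and `r₂ = ‖A r‖⁻¹ • A r`, `r₁ = ‖B r‖⁻¹ • B r` attain this bound. So every value
of the first set is dominated by one of the second and vice versa, which forces equal suprema
(also in the unbounded case, where both are `0`).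
-/

section Duality

variable {E : Type*} [NormedAddCommGroup E] [InnerProductSpace ℝ E]

theorem abs_inner_add_inner_le_norm_add_norm {u v a b : E} (hu : ‖u‖ ≤ 1) (hv : ‖v‖ ≤ 1) :
    |⟪u, a⟫ + ⟪v, b⟫| ≤ ‖a‖ + ‖b‖ :=
  calc |⟪u, a⟫ + ⟪v, b⟫| ≤ |⟪u, a⟫| + |⟪v, b⟫| := abs_add_le _ _
    _ ≤ ‖u‖ * ‖a‖ + ‖v‖ * ‖b‖ :=
      add_le_add (abs_real_inner_le_norm _ _) (abs_real_inner_le_norm _ _)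
    _ ≤ ‖a‖ + ‖b‖ :=
      add_le_add (mul_le_of_le_one_left (norm_nonneg _) hu)
        (mul_le_of_le_one_left (norm_nonneg _) hv)

theorem exists_norm_le_one_inner_eq_norm (a : E) : ∃ u : E, ‖u‖ ≤ 1 ∧ ⟪u, a⟫ = ‖a‖ := by
  refine ⟨‖a‖⁻¹ • a, ?_, ?_⟩
  · rw [norm_smul, norm_inv, norm_norm]
    exact inv_mul_le_one_of_le₀ le_rfl (norm_nonneg a)
  · rw [real_inner_smul_left, real_inner_self_eq_norm_mul_norm, ← mul_assoc, inv_mul_mul_self]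

end Duality

section SplitIntegral

variable {Ω E : Type*} [MeasurableSpace Ω] {μ : Measure Ω} [NormedAddCommGroup E] {f : Ω → E}

theorem MeasureTheory.Integrable.ite_one_zero_smul [Module ℝ E] (hf : Integrable f μ)
    {P : Ω → Prop} [DecidablePred P] (hP : MeasurableSet {z | P z}) :
    Integrable (fun z => (if P z then (1 : ℝ) else 0) • f z) μ := by
  refine (hf.indicator hP).congr (Filter.Eventually.of_forall fun z => ?_)
  by_cases h : P z <;> simp [h]

variable [InnerProductSpace ℝ E] [CompleteSpace E]

theorem integral_ite_inner_eq {q : Ω → ℝ} (hf : Integrable f μ) (hq : Measurable q) (a b : E) :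
    ∫ z, (if 0 < q z then ⟪a, f z⟫ else ⟪b, f z⟫) ∂μ =
      ⟪a, ∫ z, (if 0 < q z then (1 : ℝ) else 0) • f z ∂μ⟫ +
        ⟪b, ∫ z, (if q z ≤ 0 then (1 : ℝ) else 0) • f z ∂μ⟫ := by
  have hpos := hf.ite_one_zero_smul (P := fun z => 0 < q z) (measurableSet_lt measurable_const hq)
  have hnonpos := hf.ite_one_zero_smul (P := fun z => q z ≤ 0) (measurableSet_le hq measurable_const)
  rw [← integral_inner hpos, ← integral_inner hnonpos,
    ← integral_add (hpos.const_inner a) (hnonpos.const_inner b)]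
  refine integral_congr_ae (Filter.Eventually.of_forall fun z => ?_)
  by_cases h : 0 < q z
  · simp [h, not_le.mpr h]
  · simp [h, not_lt.mp h]

end SplitIntegral

/-- **Lemma 4.2** (decision calibration error for two actions and linear losses). -/
theorem stmt4 {X : Type*} [MeasurableSpace X] (d : ℕ)
    (D : Measure (X × EuclideanSpace ℝ (Fin d))) [IsProbabilityMeasure D]
    (p : X → EuclideanSpace ℝ (Fin d)) (hp : Measurable p)
    (hpball : ∀ x, ‖p x‖ ≤ 1)
    (hyball : ∀ᵐ z ∂D, ‖z.2‖ ≤ 1) :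
    sSup {v : ℝ | ∃ r₁ r₂ r : EuclideanSpace ℝ (Fin d), ‖r₁‖ ≤ 1 ∧ ‖r₂‖ ≤ 1 ∧
        v = |∫ z, (if 0 < ⟪r, p z.1⟫ then ⟪r₂, z.2 - p z.1⟫
                   else ⟪r₁, z.2 - p z.1⟫) ∂D|}
      = sSup {v : ℝ | ∃ r : EuclideanSpace ℝ (Fin d),
          v = ‖∫ z, (if 0 < ⟪r, p z.1⟫ then (1 : ℝ) else 0) • (z.2 - p z.1) ∂D‖
            + ‖∫ z, (if ⟪r, p z.1⟫ ≤ 0 then (1 : ℝ) else 0) • (z.2 - p z.1) ∂D‖} := by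
  have hpz : Measurable fun z : X × EuclideanSpace ℝ (Fin d) => p z.1 := hp.comp measurable_fst
  have hres : Integrable (fun z : X × EuclideanSpace ℝ (Fin d) => z.2 - p z.1) D := by
    refine Integrable.of_bound (measurable_snd.sub hpz).aestronglyMeasurable 2 ?_
    filter_upwards [hyball] with z hz
    calc ‖z.2 - p z.1‖ ≤ ‖z.2‖ + ‖p z.1‖ := norm_sub_le _ _
      _ ≤ 2 := by linarith [hpball z.1]
  have hsplit (r : EuclideanSpace ℝ (Fin d)) :=
    integral_ite_inner_eq (q := fun z => ⟪r, p z.1⟫) hres (measurable_const.inner hpz)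
  apply csSup_eq_csSup_of_forall_exists_le
  · rintro _ ⟨r₁, r₂, r, hr₁, hr₂, rfl⟩
    refine ⟨_, ⟨r, rfl⟩, ?_⟩
    rw [hsplit r]
    exact abs_inner_add_inner_le_norm_add_norm hr₂ hr₁
  · rintro _ ⟨r, rfl⟩
    obtain ⟨r₂, hr₂, hA⟩ := exists_norm_le_one_inner_eq_norm
      (∫ z, (if 0 < ⟪r, p z.1⟫ then (1 : ℝ) else 0) • (z.2 - p z.1) ∂D)
    obtain ⟨r₁, hr₁, hB⟩ := exists_norm_le_one_inner_eq_norm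
      (∫ z, (if ⟪r, p z.1⟫ ≤ 0 then (1 : ℝ) else 0) • (z.2 - p z.1) ∂D)
    refine ⟨_, ⟨r₁, r₂, r, hr₁, hr₂, rfl⟩, ?_⟩
    rw [hsplit r, hA, hB]
    exact le_abs_self _
end

section
/- Lemma 4.4 (a biased distribution with large decision calibration error). Let d ≥ 1, ε > 0, and σ ∈ {−1/√d, +1/√d}^d. Set v_i = (1/2)e_i ∈ ℝ^d and y_i = v_i + ε·sign(σ_i)·e₁ for i ∈ {1,…,d}. Then sup over r ∈ ℝ^d of ( ‖(1/d)·Σ_{i=1}^d (y_i − v_i)·1{⟨r, v_i⟩ > 0}‖₂ + ‖(1/d)·Σ_{i=1}^d (y_i − v_i)·1{⟨r, v_i⟩ ≤ 0}‖₂ ) ≥ ε; in fact, the choice r = σ makes the expression inside the supremum equal to ε. Hence the identity predictor has decision calibration error at least ε, for linear losses and optimal decision rules, under the distribution D_σ placing mass 1/d on each pair (v_i, y_i). -/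
open RealInnerProductSpace
open scoped Classical

/-!
For `r = σ` the split is by the sign of `⟪σ, v i⟫ = σ i / 2`, so each half collects the residuals
`ε · sign (σ i) · e₀` of one sign only. Nothing cancels, and the two norms add up to
`(1 / d) · d · ε = ε`. The supremum is finite because every term is at most
`(2 / d) ∑ ‖y i - v i‖`.
-/

/-- The (empirical) decision calibration error of the identity predictor on the
finite distribution putting mass `1/d` on each pair `(v i, w i)`, for the
half-space split induced by `r` (cf. Lemma 4.2). -/
noncomputable def calErr (d : ℕ) (w v : Fin d → EuclideanSpace ℝ (Fin d))
    (r : EuclideanSpace ℝ (Fin d)) : ℝ :=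
  ‖(1 / (d : ℝ)) • ∑ i, (if 0 < ⟪r, v i⟫ then (1 : ℝ) else 0) • (w i - v i)‖
    + ‖(1 / (d : ℝ)) • ∑ i, (if ⟪r, v i⟫ ≤ 0 then (1 : ℝ) else 0) • (w i - v i)‖

lemma norm_sum_boole_smul_le {ι E : Type*} [Fintype ι] [SeminormedAddCommGroup E]
    [NormedSpace ℝ E] (p : ι → Prop) [DecidablePred p] (x : ι → E) :
    ‖∑ i, (if p i then (1 : ℝ) else 0) • x i‖ ≤ ∑ i, ‖x i‖ := by
  refine (norm_sum_le _ _).trans (Finset.sum_le_sum fun i _ => ?_)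
  split_ifs <;> simp

lemma norm_sum_boole_smul_unit {ι E : Type*} [Fintype ι] [SeminormedAddCommGroup E]
    [NormedSpace ℝ E] (p : ι → Prop) [DecidablePred p] (c : ι → ℝ) {e : E} (he : ‖e‖ = 1) :
    ‖∑ i, (if p i then (1 : ℝ) else 0) • c i • e‖ = |∑ i with p i, c i| := by
  simp only [smul_smul, ← Finset.sum_smul, norm_smul, he, mul_one, Real.norm_eq_abs, boole_mul,
    Finset.sum_filter]

lemma calErr_le (d : ℕ) (w v : Fin d → EuclideanSpace ℝ (Fin d)) (r : EuclideanSpace ℝ (Fin d)) :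
    calErr d w v r ≤ 2 / d * ∑ i, ‖w i - v i‖ := by
  have hnorm : ‖(1 / (d : ℝ))‖ = 1 / d := by simp
  rw [calErr, norm_smul, norm_smul, hnorm]
  calc _ ≤ 1 / (d : ℝ) * ∑ i, ‖w i - v i‖ + 1 / d * ∑ i, ‖w i - v i‖ := by
        gcongr <;> exact norm_sum_boole_smul_le _ _
    _ = _ := by ring

lemma calErr_eq_of_sub_eq_smul {d : ℕ} {w v : Fin d → EuclideanSpace ℝ (Fin d)}
    {r e : EuclideanSpace ℝ (Fin d)} (he : ‖e‖ = 1) (c : Fin d → ℝ)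
    (hc : ∀ i, w i - v i = c i • e)
    (hpos : ∀ i, 0 < ⟪r, v i⟫ → 0 ≤ c i) (hneg : ∀ i, ⟪r, v i⟫ ≤ 0 → c i ≤ 0) :
    calErr d w v r = 1 / d * ∑ i, |c i| := by
  have hnorm : ‖(1 / (d : ℝ))‖ = 1 / d := by simp
  simp only [calErr, hc, norm_smul, hnorm, norm_sum_boole_smul_unit _ c he]
  have h₁ : ∑ i with 0 < ⟪r, v i⟫, c i = ∑ i with 0 < ⟪r, v i⟫, |c i| :=
    Finset.sum_congr rfl fun i hi => (abs_of_nonneg (hpos i (Finset.mem_filter.1 hi).2)).symm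
  have h₂ : ∑ i with ⟪r, v i⟫ ≤ 0, c i = -∑ i with ¬ 0 < ⟪r, v i⟫, |c i| := by
    simp only [not_lt, ← Finset.sum_neg_distrib]
    refine Finset.sum_congr rfl fun i hi => ?_
    rw [abs_of_nonpos (hneg i (Finset.mem_filter.1 hi).2), neg_neg]
  rw [h₁, h₂, abs_neg, abs_of_nonneg (Finset.sum_nonneg fun i _ => abs_nonneg _),
    abs_of_nonneg (Finset.sum_nonneg fun i _ => abs_nonneg _), ← mul_add,
    Finset.sum_filter_add_sum_filter_not]

lemma calErr_eq_of_sub_eq_sign_smul {d : ℕ} (hd : 0 < d) {a ε : ℝ} (ha : 0 < a) (hε : 0 ≤ ε)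
    {σ e : EuclideanSpace ℝ (Fin d)} (hσ : ∀ i, σ i ≠ 0) (he : ‖e‖ = 1)
    {v y : Fin d → EuclideanSpace ℝ (Fin d)} (hv : ∀ i, v i = EuclideanSpace.single i a)
    (hy : ∀ i, y i = v i + (ε * Real.sign (σ i)) • e) :
    calErr d y v σ = ε := by
  have hσv : ∀ i, ⟪σ, v i⟫ = σ i * a := fun i => by
    simp [hv i, EuclideanSpace.inner_single_right, mul_comm]
  have habs : ∀ i, |ε * Real.sign (σ i)| = ε := fun i => by
    rcases Real.sign_apply_eq_of_ne_zero _ (hσ i) with h | h <;> simp [h, hε]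
  rw [calErr_eq_of_sub_eq_smul he (fun i => ε * Real.sign (σ i))
    (fun i => by rw [hy i, add_sub_cancel_left])
    (fun i h => by
      rw [hσv, mul_pos_iff_of_pos_right ha] at h
      simp [Real.sign_of_pos h, hε])
    (fun i h => by
      rw [hσv] at h
      simp [Real.sign_of_neg ((nonpos_of_mul_nonpos_left h ha).lt_of_ne (hσ i)), hε])]
  simp only [habs, Finset.sum_const, Finset.card_univ, Fintype.card_fin, nsmul_eq_mul]
  field_simp

/-- **Lemma 4.4** (a biased distribution with large decision calibration error).
With `v i = (1/2)eᵢ` and `y i = v i + ε·sign(σ i)·e₁` for a sign pattern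
`σ ∈ {-1/√d, +1/√d}^d`, the choice `r = σ` makes the calibration-error expression
equal to `ε`, and hence the supremum over `r` is at least `ε`. -/
theorem stmt6 (d : ℕ) (hd : 0 < d) (ε : ℝ) (hε : 0 < ε)
    (σ : EuclideanSpace ℝ (Fin d))
    (hσ : ∀ i, σ i = 1 / Real.sqrt d ∨ σ i = -(1 / Real.sqrt d))
    (v y : Fin d → EuclideanSpace ℝ (Fin d))
    (hv : ∀ i, v i = EuclideanSpace.single i ((1 : ℝ) / 2))
    (hy : ∀ i, y i = v i
        + (ε * Real.sign (σ i)) • EuclideanSpace.single (⟨0, hd⟩ : Fin d) (1 : ℝ)) :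
    calErr d y v σ = ε ∧
      ε ≤ sSup {t : ℝ | ∃ r : EuclideanSpace ℝ (Fin d), t = calErr d y v r} := by
  have hσ₀ : ∀ i, σ i ≠ 0 := fun i => by
    have : 0 < 1 / Real.sqrt d := by positivity
    rcases hσ i with h | h <;> rw [h] <;> linarith
  have hcal : calErr d y v σ = ε :=
    calErr_eq_of_sub_eq_sign_smul hd one_half_pos hε.le hσ₀ (by simp) hv hy
  refine ⟨hcal, le_csSup ⟨2 / d * ∑ i, ‖y i - v i‖, ?_⟩ ⟨σ, hcal.symm⟩⟩
  rintro t ⟨r, rfl⟩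
  exact calErr_le d y v r
end

section
/- Lemma B.4 (ℓ₁–ℓ₂ Lipschitz continuity of the softmax). Let K ≥ 1 and β > 0, and for z ∈ ℝ^K define softmax_β(z)_i = exp(−β·z_i) / Σ_{j=1}^K exp(−β·z_j). Then for all z, z′ ∈ ℝ^K: Σ_{i=1}^K |softmax_β(z)_i − softmax_β(z′)_i| ≤ √2 · β · ‖z − z′‖₂. -/
/-!
For `p = softmax x` and `q = softmax y` the log-ratios `log pᵢ - log qᵢ` equal `xᵢ - yᵢ` up to a
constant, which drops out against `∑ (pᵢ - qᵢ) = 0`; so the symmetrised Kullback–Leibler divergence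
`∑ (pᵢ - qᵢ)(log pᵢ - log qᵢ)` equals `∑ (pᵢ - qᵢ)(xᵢ - yᵢ) ≤ ‖p - q‖₁ ‖x - y‖_∞`. Conversely
`2 (a - b)² ≤ (a + b)(a - b)(log a - log b)` (the artanh series dominates its first term), and
Cauchy–Schwarz with weights `pᵢ + qᵢ` turns this into `‖p - q‖₁² ≤` the symmetrised divergence.
Hence `‖p - q‖₁ ≤ ‖x - y‖_∞`, and `x = -β z` gives `‖x - y‖_∞ ≤ β ‖z - z'‖₂`.
-/

open Real Finset

namespace Real

theorem two_mul_sq_le_mul_log_one_add_sub_log_one_sub {x : ℝ} (hx : |x| < 1) :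
    2 * x ^ 2 ≤ x * (log (1 + x) - log (1 - x)) := by
  have h := le_hasSum ((hasSum_log_sub_log_of_abs_lt_one hx).mul_left x) 0 fun k _ => by
    rw [show x * (2 * (1 / (2 * k + 1)) * x ^ (2 * k + 1)) = 2 / (2 * k + 1) * (x ^ (k + 1)) ^ 2 by
      ring]
    positivity
  norm_num at h
  linarith

theorem two_mul_sq_sub_le_mul_log_sub {a b : ℝ} (ha : 0 < a) (hb : 0 < b) :
    2 * (a - b) ^ 2 ≤ (a + b) * ((a - b) * (log a - log b)) := by
  have hab : 0 < a + b := add_pos ha hb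
  set x := (a - b) / (a + b) with hx_def
  have hx : |x| < 1 := by
    rw [abs_div, abs_of_pos hab, div_lt_one hab, abs_sub_lt_iff]
    constructor <;> linarith
  have hlog : log (1 + x) - log (1 - x) = log a - log b := by
    have h1 : 1 + x = 2 * a / (a + b) := by rw [hx_def]; field_simp; ring
    have h2 : 1 - x = 2 * b / (a + b) := by rw [hx_def]; field_simp; ring
    rw [h1, h2, ← log_div (by positivity) (by positivity), ← log_div ha.ne' hb.ne']
    congr 1
    field_simp
  calc 2 * (a - b) ^ 2 = (a + b) ^ 2 * (2 * x ^ 2) := by rw [hx_def]; field_simp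
    _ ≤ (a + b) ^ 2 * (x * (log (1 + x) - log (1 - x))) :=
      mul_le_mul_of_nonneg_left (two_mul_sq_le_mul_log_one_add_sub_log_one_sub hx) (by positivity)
    _ = (a + b) * ((a - b) * (log a - log b)) := by rw [hlog, hx_def]; field_simp

end Real

theorem two_mul_sq_sum_abs_sub_le_mul_sum_mul_log_sub {ι : Type*} (s : Finset ι) {p q : ι → ℝ}
    (hp : ∀ i ∈ s, 0 < p i) (hq : ∀ i ∈ s, 0 < q i) :
    2 * (∑ i ∈ s, |p i - q i|) ^ 2 ≤
      (∑ i ∈ s, (p i + q i)) * ∑ i ∈ s, (p i - q i) * (log (p i) - log (q i)) := by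
  have key := fun i hi => two_mul_sq_sub_le_mul_log_sub (hp i hi) (hq i hi)
  have hcs := sum_sq_le_sum_mul_sum_of_sq_le_mul s (r := fun i => |p i - q i|)
    (g := fun i => (p i - q i) * (log (p i) - log (q i)) / 2)
    (fun i hi => (add_pos (hp i hi) (hq i hi)).le) (fun i hi => ?_) (fun i hi => ?_)
  · rw [← sum_div] at hcs
    linarith
  · have := key i hi
    have := add_pos (hp i hi) (hq i hi)
    nlinarith [sq_nonneg (p i - q i)]
  · rw [sq_abs]
    linarith [key i hi]

section Softmax

variable {ι : Type*} [Fintype ι]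

noncomputable def softmax (x : ι → ℝ) (i : ι) : ℝ :=
  exp (x i) / ∑ j, exp (x j)

theorem sum_exp_pos_s12 [Nonempty ι] (x : ι → ℝ) : 0 < ∑ j, exp (x j) :=
  sum_pos (fun j _ => exp_pos (x j)) univ_nonempty

theorem softmax_pos [Nonempty ι] (x : ι → ℝ) (i : ι) : 0 < softmax x i :=
  div_pos (exp_pos _) (sum_exp_pos_s12 x)

theorem sum_softmax [Nonempty ι] (x : ι → ℝ) : ∑ i, softmax x i = 1 := by
  simp only [softmax]
  rw [← sum_div, div_self (sum_exp_pos_s12 x).ne']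

theorem log_softmax [Nonempty ι] (x : ι → ℝ) (i : ι) :
    log (softmax x i) = x i - log (∑ j, exp (x j)) := by
  simp only [softmax]
  rw [log_div (exp_pos _).ne' (sum_exp_pos_s12 x).ne', log_exp]

theorem sum_sub_mul_log_softmax_sub [Nonempty ι] (x y : ι → ℝ) :
    ∑ i, (softmax x i - softmax y i) * (log (softmax x i) - log (softmax y i)) =
      ∑ i, (softmax x i - softmax y i) * (x i - y i) := by
  simp only [log_softmax]
  have hsplit : ∀ i, (softmax x i - softmax y i) *
      (x i - log (∑ j, exp (x j)) - (y i - log (∑ j, exp (y j)))) =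
      (softmax x i - softmax y i) * (x i - y i) +
        (softmax x i - softmax y i) * (log (∑ j, exp (y j)) - log (∑ j, exp (x j))) := by
    intro i; ring
  rw [sum_congr rfl (fun i _ => hsplit i), sum_add_distrib, ← sum_mul, sum_sub_distrib,
    sum_softmax, sum_softmax, sub_self, zero_mul, add_zero]

theorem sum_abs_softmax_sub_le [Nonempty ι] {x y : ι → ℝ} {M : ℝ} (h : ∀ i, |x i - y i| ≤ M) :
    ∑ i, |softmax x i - softmax y i| ≤ M := by
  set S := ∑ i, |softmax x i - softmax y i|
  have hM : 0 ≤ M := (abs_nonneg _).trans (h (Classical.arbitrary ι))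
  have hS : 0 ≤ S := sum_nonneg fun i _ => abs_nonneg _
  have hpair : ∑ i, (softmax x i - softmax y i) * (x i - y i) ≤ S * M := by
    rw [sum_mul]
    refine sum_le_sum fun i _ => ?_
    calc (softmax x i - softmax y i) * (x i - y i)
        ≤ |softmax x i - softmax y i| * |x i - y i| := (le_abs_self _).trans_eq (abs_mul _ _)
      _ ≤ |softmax x i - softmax y i| * M := by gcongr; exact h i
  have hsq : S ^ 2 ≤ S * M := by
    have := two_mul_sq_sum_abs_sub_le_mul_sum_mul_log_sub univ (fun i _ => softmax_pos x i)
      (fun i _ => softmax_pos y i)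
    rw [sum_add_distrib, sum_softmax, sum_softmax, sum_sub_mul_log_softmax_sub] at this
    linarith
  nlinarith

end Softmax

/-- **Lemma B.4** (ℓ₁–ℓ₂ Lipschitz continuity of the softmax). -/
theorem stmt12 (K : ℕ) (hK : 1 ≤ K) (β : ℝ) (hβ : 0 < β) (z z' : Fin K → ℝ) :
    ∑ i, |Real.exp (-β * z i) / (∑ j, Real.exp (-β * z j))
          - Real.exp (-β * z' i) / (∑ j, Real.exp (-β * z' j))|
      ≤ Real.sqrt 2 * β * Real.sqrt (∑ i, (z i - z' i) ^ 2) := by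
  have : Nonempty (Fin K) := ⟨⟨0, hK⟩⟩
  have hcoord : ∀ i, |-β * z i - -β * z' i| ≤ β * √(∑ j, (z j - z' j) ^ 2) := by
    intro i
    rw [show -β * z i - -β * z' i = -β * (z i - z' i) by ring, abs_mul, abs_neg, abs_of_pos hβ]
    gcongr
    exact abs_le_sqrt (single_le_sum (f := fun j => (z j - z' j) ^ 2)
      (fun j _ => sq_nonneg _) (mem_univ i))
  calc _ = ∑ i, |softmax (fun j => -β * z j) i - softmax (fun j => -β * z' j) i| := rfl
    _ ≤ β * √(∑ j, (z j - z' j) ^ 2) := sum_abs_softmax_sub_le hcoord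
    _ ≤ √2 * β * √(∑ j, (z j - z' j) ^ 2) := by
      rw [mul_assoc]
      exact le_mul_of_one_le_left (by positivity) one_lt_sqrt_two.le
end
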